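/- arXiv:2512.09077 — 6 statements merged into one kernel-verified Lean document; each statement's English description precedes it below -/
import Mathlib

section
/- For every real t in (0, 2.59), the Bessel function of the first kind of order zero satisfies |J_0(t)| ≤ exp(-t²/4 - t⁴/64). -/
open Real intervalIntegral

set_option maxHeartbeats 1000000


lemma fact_ge (i : ℕ) : (14:ℕ).factorial * 225 ^ i ≤ (2*i+14).factorial := by
  induction i with
  | zero => simp
  | succ k ih =>
    have e : 2*(k+1)+14 = (2*k+14)+1+1 := by ring
    have h1 : (2*(k+1)+14).factorial = ((2*k+16) * (2*k+15)) * (2*k+14).factorial := by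
      rw [e, Nat.factorial_succ, Nat.factorial_succ]; ring
    calc (14:ℕ).factorial * 225 ^ (k+1) = 225 * ((14:ℕ).factorial * 225 ^ k) := by ring
    _ ≤ 225 * (2*k+14).factorial := Nat.mul_le_mul_left _ ih
    _ ≤ ((2*k+16)*(2*k+15)) * (2*k+14).factorial :=
        Nat.mul_le_mul_right _ (by nlinarith)
    _ = (2*(k+1)+14).factorial := h1.symm

lemma cos_taylor (y : ℝ) (hy : y^2 ≤ 169/25) :
    |Real.cos y - (1 - y^2/2 + y^4/24 - y^6/720 + y^8/40320 - y^10/3628800 + y^12/479001600)|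
      ≤ y^14/80000000000 := by
  have h := Real.hasSum_cos y
  set f : ℕ → ℝ := fun n => (-1) ^ n * y ^ (2 * n) / ((2 * n).factorial : ℝ) with hf
  have hsum : Summable f := h.summable
  have hkey : Real.cos y - ∑ i ∈ Finset.range 7, f i = ∑' i, f (i + 7) := by
    have h2 := Summable.sum_add_tsum_nat_add (f := f) 7 hsum
    rw [h.tsum_eq] at h2
    linarith
  have hps : ∑ i ∈ Finset.range 7, f i
      = 1 - y^2/2 + y^4/24 - y^6/720 + y^8/40320 - y^10/3628800 + y^12/479001600 := by
    rw [hf]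
    simp only [Finset.sum_range_succ, Finset.sum_range_zero]
    norm_num [Nat.factorial]
    ring
  have hterm : ∀ i : ℕ, |f (i + 7)| ≤ y^14/87178291200 * (1/33)^i := by
    intro i
    have hy0 : (0:ℝ) ≤ y^2 := sq_nonneg y
    have h1 : |f (i+7)| = (y^2)^(i+7) / ((2*(i+7)).factorial : ℝ) := by
      rw [hf]
      simp only []
      rw [abs_div, abs_mul, abs_pow, abs_pow, abs_neg, abs_one, one_pow, one_mul,
        pow_mul, sq_abs, Nat.abs_cast]
    rw [h1]
    have hnum : (y^2)^(i+7) ≤ y^14 * (169/25)^i := by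
      have e : (y^2)^(i+7) = (y^2)^7 * (y^2)^i := by rw [← pow_add]; ring_nf
      rw [e]
      have h2 : (y^2)^i ≤ (169/25)^i := pow_le_pow_left₀ hy0 hy i
      have h3 : (y^2)^7 = y^14 := by rw [← pow_mul]
      rw [h3]
      have h14 : (0:ℝ) ≤ y^14 := by positivity
      nlinarith [pow_nonneg hy0 i]
    have hden : (87178291200:ℝ) * 225^i ≤ ((2*(i+7)).factorial : ℝ) := by
      have h4 : ((14:ℕ).factorial * 225 ^ i : ℕ) ≤ ((2*i+14).factorial : ℕ) := fact_ge i
      have e : 2*(i+7) = 2*i+14 := by ring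
      rw [e]
      calc (87178291200:ℝ) * 225^i = (((14:ℕ).factorial * 225 ^ i : ℕ) : ℝ) := by
            push_cast [Nat.factorial]; norm_num
      _ ≤ (((2*i+14).factorial : ℕ) : ℝ) := by exact_mod_cast h4
    have hdpos : (0:ℝ) < ((2*(i+7)).factorial : ℝ) := by positivity
    rw [div_le_iff₀ hdpos]
    calc (y^2)^(i+7) ≤ y^14 * (169/25)^i := hnum
    _ ≤ (y^14/87178291200 * (1/33)^i) * (87178291200 * 225^i) := by
        have h14 : (0:ℝ) ≤ y^14 := by positivity
        have h5 : (169/25:ℝ)^i ≤ ((1/33)*225)^i := pow_le_pow_left₀ (by norm_num) (by norm_num) i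
        rw [mul_pow] at h5
        have h6 : (0:ℝ) ≤ (1/33:ℝ)^i := by positivity
        have h7 : (0:ℝ) ≤ (225:ℝ)^i := by positivity
        calc y^14 * (169/25)^i ≤ y^14 * ((1/33)^i * 225^i) := by nlinarith
        _ = (y^14/87178291200 * (1/33)^i) * (87178291200 * 225^i) := by ring
    _ ≤ (y^14/87178291200 * (1/33)^i) * ((2*(i+7)).factorial : ℝ) := by
        apply mul_le_mul_of_nonneg_left hden
        positivity
  have hgsum : Summable (fun i : ℕ => y^14/87178291200 * (1/33)^i) :=
    (summable_geometric_of_lt_one (by norm_num) (by norm_num)).mul_left _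
  have habs : Summable (fun i => |f (i + 7)|) :=
    Summable.of_nonneg_of_le (fun i => abs_nonneg _) hterm hgsum
  have htail : |∑' i, f (i + 7)| ≤ y^14/87178291200 * (33/32) := by
    calc |∑' i, f (i + 7)| ≤ ∑' i, |f (i + 7)| := by
          simpa [Real.norm_eq_abs] using
            norm_tsum_le_tsum_norm (f := fun i => f (i+7)) (by simpa [Real.norm_eq_abs] using habs)
    _ ≤ ∑' i : ℕ, y^14/87178291200 * (1/33)^i := Summable.tsum_le_tsum hterm habs hgsum
    _ = y^14/87178291200 * (1 - 1/33)⁻¹ := by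
          rw [tsum_mul_left, tsum_geometric_of_lt_one (by norm_num) (by norm_num)]
    _ = y^14/87178291200 * (33/32) := by norm_num
  rw [hps] at hkey
  rw [hkey]
  calc |∑' i, f (i+7)| ≤ y^14/87178291200 * (33/32) := htail
  _ ≤ y^14/80000000000 := by
      have h14 : (0:ℝ) ≤ y^14 := by positivity
      nlinarith


lemma polyA (s : ℝ) (hs : 0 < s) (hs' : s ≤ 6.7081) :
    1 - s/4 + s^2/64 - s^3/2304 + s^4/147456 - s^5/14745600 + s^6/2123366400 + s^7/80000000000
      ≤ (1 - s/8)^2 := by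
  nlinarith [mul_nonneg (pow_nonneg hs.le 3) (sub_nonneg.2 hs'),
    mul_nonneg (pow_nonneg hs.le 5) (sub_nonneg.2 hs'),
    mul_nonneg (pow_nonneg hs.le 6) (sub_nonneg.2 hs'),
    mul_nonneg (mul_nonneg (pow_nonneg hs.le 3) (sub_nonneg.2 hs')) (sub_nonneg.2 hs'),
    pow_nonneg hs.le 3, pow_nonneg hs.le 4, pow_nonneg hs.le 5, pow_nonneg hs.le 6,
    pow_nonneg hs.le 7]

lemma polyB (s : ℝ) (hs : 0 < s) (hs' : s ≤ 6.7081) :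
    -(1 - s/4 + s^2/64 - s^3/2304 + s^4/147456 - s^5/14745600 + s^6/2123366400) + s^7/80000000000
      ≤ 0.0922 := by
  nlinarith [mul_nonneg (pow_nonneg hs.le 3) (sub_nonneg.2 hs'),
    mul_nonneg (pow_nonneg hs.le 4) (sub_nonneg.2 hs'),
    mul_nonneg (pow_nonneg hs.le 5) (sub_nonneg.2 hs'),
    mul_nonneg (pow_nonneg hs.le 6) (sub_nonneg.2 hs'),
    mul_nonneg (mul_nonneg (pow_nonneg hs.le 2) (sub_nonneg.2 hs')) (sub_nonneg.2 hs'),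
    mul_nonneg (mul_nonneg (pow_nonneg hs.le 3) (sub_nonneg.2 hs')) (sub_nonneg.2 hs'),
    mul_nonneg (mul_nonneg (pow_nonneg hs.le 4) (sub_nonneg.2 hs')) (sub_nonneg.2 hs'),
    mul_nonneg (mul_nonneg (pow_nonneg hs.le 5) (sub_nonneg.2 hs')) (sub_nonneg.2 hs'),
    sq_nonneg s, pow_nonneg hs.le 3, pow_nonneg hs.le 7,
    sq_nonneg (s - 6.7081), sq_nonneg (s - 3), sq_nonneg (s-5)]


lemma sq_le_exp_aux (u : ℝ) (h0 : 0 ≤ u) (h1 : u ≤ 0.84) :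
    (1 - u)^2 ≤ Real.exp (-(u^2) - 2*u) := by
  have hb := Real.exp_bound (x := u) (by rw [abs_of_nonneg h0]; linarith) (n := 4) (by norm_num)
  have hexp : Real.exp u ≤ 1 + u + u^2/2 + u^3/6 + u^4 * (5/96) := by
    have hsum : ∑ m ∈ Finset.range 4, u^m/(m.factorial : ℝ) = 1 + u + u^2/2 + u^3/6 := by
      simp [Finset.sum_range_succ, Nat.factorial]; try ring
    rw [hsum, abs_of_nonneg h0] at hb
    have := abs_le.1 hb
    norm_num [Nat.factorial] at this ⊢
    linarith [this.2]
  have h2 : (1 - u) * Real.exp u ≤ 1 - u^2/2 := by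
    have h3 : (1 - u) * Real.exp u ≤ (1 - u) * (1 + u + u^2/2 + u^3/6 + u^4 * (5/96)) :=
      mul_le_mul_of_nonneg_left hexp (by linarith)
    nlinarith [pow_nonneg h0 3, pow_nonneg h0 4, pow_nonneg h0 5]
  have h3 : 1 - u^2/2 ≤ Real.exp (-(u^2/2)) := by
    have := Real.add_one_le_exp (-(u^2/2)); linarith
  have h4 : 1 - u ≤ Real.exp (-(u^2/2) - u) := by
    rw [Real.exp_sub, le_div_iff₀ (Real.exp_pos u)]
    linarith
  have h5 : (1-u)^2 ≤ Real.exp (-(u^2/2) - u) * Real.exp (-(u^2/2) - u) := by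
    have h6 : 0 ≤ 1 - u := by linarith
    nlinarith
  calc (1-u)^2 ≤ Real.exp (-(u^2/2) - u) * Real.exp (-(u^2/2) - u) := h5
  _ = Real.exp (-(u^2) - 2*u) := by rw [← Real.exp_add]; ring_nf

lemma exp_big : Real.exp 2.3801283 ≤ 10.84 := by
  have h1 : Real.exp 2.3801283 = Real.exp 1 * Real.exp 1 * Real.exp 0.3801283 := by
    rw [← Real.exp_add, ← Real.exp_add]; norm_num
  have h2 : Real.exp 1 ≤ 2.7182818286 := le_of_lt Real.exp_one_lt_d9
  have h3 : Real.exp 0.3801283 ≤ 1.46248 := by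
    have hb := Real.exp_bound (x := (0.3801283:ℝ)) (by rw [abs_of_nonneg] <;> norm_num)
      (n := 6) (by norm_num)
    have hsum : ∑ m ∈ Finset.range 6, (0.3801283:ℝ)^m/(m.factorial : ℝ)
        = 1 + 0.3801283 + 0.3801283^2/2 + 0.3801283^3/6 + 0.3801283^4/24 + 0.3801283^5/120 := by
      simp [Finset.sum_range_succ, Nat.factorial]; try ring
    rw [hsum, abs_of_nonneg (by norm_num : (0:ℝ) ≤ 0.3801283)] at hb
    have := abs_le.1 hb
    norm_num [Nat.factorial] at this ⊢
    linarith [this.2]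
  rw [h1]
  have e1 : (0:ℝ) < Real.exp 1 := Real.exp_pos 1
  have e2 : (0:ℝ) < Real.exp 0.3801283 := Real.exp_pos _
  nlinarith

lemma exp_lb (t : ℝ) (ht : t^2 ≤ 6.7081) : (0.0922:ℝ) ≤ Real.exp (-(t^2/4) - t^4/64) := by
  have harg : -2.3801283 ≤ -(t^2/4) - t^4/64 := by nlinarith [sq_nonneg t, sq_nonneg (t^2)]
  have h1 : Real.exp (-2.3801283) ≤ Real.exp (-(t^2/4) - t^4/64) := Real.exp_le_exp.2 harg
  have h2 : (0.0922:ℝ) ≤ Real.exp (-2.3801283) := by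
    have hp := Real.exp_pos (2.3801283:ℝ)
    have hq := Real.exp_pos (-2.3801283:ℝ)
    have hmul : Real.exp (-2.3801283) * Real.exp 2.3801283 = 1 := by
      rw [← Real.exp_add]; norm_num
    nlinarith [exp_big, mul_nonneg hq.le (sub_nonneg.2 exp_big)]
  linarith

/-- Bessel function of the first kind of order 0. -/
noncomputable def besselJ0 (t : ℝ) : ℝ :=
  (1 / Real.pi) * ∫ u in (0:ℝ)..Real.pi, Real.cos (t * Real.sin u)

lemma besselJ0_approx (t : ℝ) (ht : t^2 ≤ 169/25) :
    |besselJ0 t - (1 - t^2/4 + t^4/64 - t^6/2304 + t^8/147456 - t^10/14745600 + t^12/2123366400)|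
      ≤ t^14/80000000000 := by
  set G : ℝ := 1 - t^2/4 + t^4/64 - t^6/2304 + t^8/147456 - t^10/14745600 + t^12/2123366400 with hG
  have hc : IntervalIntegrable (fun u => Real.cos (t * Real.sin u)) MeasureTheory.volume 0 π :=
    (by apply Continuous.intervalIntegrable; fun_prop)
  have hT : IntervalIntegrable (fun u => 1 - (t*Real.sin u)^2/2 + (t*Real.sin u)^4/24
      - (t*Real.sin u)^6/720 + (t*Real.sin u)^8/40320 - (t*Real.sin u)^10/3628800
      + (t*Real.sin u)^12/479001600) MeasureTheory.volume 0 π :=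
    (by apply Continuous.intervalIntegrable; fun_prop)
  have hTint : (∫ u in (0:ℝ)..π, (1 - (t*Real.sin u)^2/2 + (t*Real.sin u)^4/24
      - (t*Real.sin u)^6/720 + (t*Real.sin u)^8/40320 - (t*Real.sin u)^10/3628800
      + (t*Real.sin u)^12/479001600)) = π * G := by
    have heq : (fun u => 1 - (t*Real.sin u)^2/2 + (t*Real.sin u)^4/24
        - (t*Real.sin u)^6/720 + (t*Real.sin u)^8/40320 - (t*Real.sin u)^10/3628800
        + (t*Real.sin u)^12/479001600)
        = fun u => ∑ k ∈ Finset.range 7,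
            ((-1)^k * t^(2*k) / ((2*k).factorial : ℝ)) * Real.sin u ^ (2*k) := by
      funext u
      simp only [Finset.sum_range_succ, Finset.sum_range_zero]
      norm_num [Nat.factorial]
      ring
    rw [heq, intervalIntegral.integral_finset_sum
      (fun i _ => (by apply Continuous.intervalIntegrable; fun_prop))]
    simp only [intervalIntegral.integral_const_mul, integral_sin_pow_even]
    simp only [Finset.sum_range_succ, Finset.sum_range_zero, Finset.prod_range_succ,
      Finset.prod_range_zero]
    norm_num [Nat.factorial, hG]
    ring
  have hsplit : besselJ0 t - G = (1/π) * ∫ u in (0:ℝ)..π,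
      (Real.cos (t*Real.sin u) - (1 - (t*Real.sin u)^2/2 + (t*Real.sin u)^4/24
      - (t*Real.sin u)^6/720 + (t*Real.sin u)^8/40320 - (t*Real.sin u)^10/3628800
      + (t*Real.sin u)^12/479001600)) := by
    rw [intervalIntegral.integral_sub hc hT, hTint, besselJ0]
    have hπ : (π:ℝ) ≠ 0 := Real.pi_ne_zero
    field_simp
  have hbound : ‖∫ u in (0:ℝ)..π,
      (Real.cos (t*Real.sin u) - (1 - (t*Real.sin u)^2/2 + (t*Real.sin u)^4/24
      - (t*Real.sin u)^6/720 + (t*Real.sin u)^8/40320 - (t*Real.sin u)^10/3628800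
      + (t*Real.sin u)^12/479001600))‖ ≤ (t^14/80000000000) * |π - 0| := by
    apply intervalIntegral.norm_integral_le_of_norm_le_const
    intro u hu
    rw [Real.norm_eq_abs]
    have hs2 : Real.sin u ^ 2 ≤ 1 := Real.sin_sq_le_one u
    have hs2' : (0:ℝ) ≤ Real.sin u ^ 2 := sq_nonneg _
    have hy2 : (t * Real.sin u)^2 ≤ 169/25 := by
      have : (t * Real.sin u)^2 = t^2 * Real.sin u ^2 := by ring
      nlinarith [sq_nonneg t]
    refine (cos_taylor _ hy2).trans ?_
    have h14 : (t*Real.sin u)^14 ≤ t^14 := by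
      have e : (t*Real.sin u)^14 = t^14 * (Real.sin u^2)^7 := by ring
      have h1 : (Real.sin u^2)^7 ≤ 1 := pow_le_one₀ hs2' hs2
      have h2 : (0:ℝ) ≤ t^14 := by positivity
      nlinarith [pow_nonneg hs2' 7]
    linarith
  have habs : |besselJ0 t - G| ≤ t^14/80000000000 := by
    rw [hsplit, abs_mul, abs_of_nonneg (by positivity : (0:ℝ) ≤ 1/π)]
    rw [Real.norm_eq_abs] at hbound
    have hπ : (0:ℝ) < π := Real.pi_pos
    have : |π - 0| = π := by rw [sub_zero, abs_of_pos hπ]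
    rw [this] at hbound
    calc 1/π * |∫ u in (0:ℝ)..π, _| ≤ 1/π * ((t^14/80000000000) * π) := by
          apply mul_le_mul_of_nonneg_left hbound (by positivity)
    _ = t^14/80000000000 := by field_simp
  exact habs

theorem stmt0 (t : ℝ) (ht0 : 0 < t) (ht1 : t < 2.59) :
    |besselJ0 t| ≤ Real.exp (-(t ^ 2 / 4) - t ^ 4 / 64) := by
  have hs : t^2 ≤ 6.7081 := by nlinarith
  have hs169 : t^2 ≤ 169/25 := by nlinarith
  have happ := besselJ0_approx t hs169
  obtain ⟨hlo, hhi⟩ := abs_le.1 happ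
  have hspos : (0:ℝ) < t^2 := by positivity
  have hupper : besselJ0 t ≤ Real.exp (-(t ^ 2 / 4) - t ^ 4 / 64) := by
    have hA := polyA (t^2) hspos hs
    have hsq : (1 - t^2/8)^2 ≤ Real.exp (-(t ^ 2 / 4) - t ^ 4 / 64) := by
      have h := sq_le_exp_aux (t^2/8) (by positivity) (by nlinarith)
      have he : -((t^2/8)^2) - 2*(t^2/8) = -(t ^ 2 / 4) - t ^ 4 / 64 := by ring
      rw [he] at h
      exact h
    have hGE : besselJ0 t ≤ (1 - t^2/8)^2 := by
      ring_nf at hA hhi ⊢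
      linarith
    linarith
  have hlower : -Real.exp (-(t ^ 2 / 4) - t ^ 4 / 64) ≤ besselJ0 t := by
    have hB := polyB (t^2) hspos hs
    have hE := exp_lb t hs
    ring_nf at hB hlo
    linarith
  rw [abs_le]
  exact ⟨hlower, hupper⟩
end

section
/- The function p ↦ log D(p), where D(p) = 2^{p/2} Γ(1-p) / Γ(1-p/2)³, is convex on the interval (0,1). -/
open Real

noncomputable def D (p : ℝ) : ℝ :=
  2 ^ (p / 2) * Real.Gamma (1 - p) / Real.Gamma (1 - p / 2) ^ 3

/-!
Euler's limit formula writes `log Γ(x)` as the limit of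
`x log n + log n! - ∑_{m ≤ n} log (x + m)`. Inserting it for both Gamma factors of `D` expresses
`log D p`, up to an affine function of `p`, as the limit of partial sums of
`∑_m (3 log (m + 1 - p/2) - log (m + 1 - p))`. Each summand is convex on `(0, 1)`: its second
derivative `(c - p)⁻² - (3/4) (c - p/2)⁻²` (with `c = m + 1`) is nonnegative because
`4 (c - p/2)² - 3 (c - p)² = c² + 2p (c - p)`. Pointwise limits of convex functions are convex.
-/

open Filter Topology Set BohrMollerup
open scoped Nat

theorem convexOn_of_tendsto {ι E : Type*} [AddCommGroup E] [Module ℝ E] {s : Set E}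
    {l : Filter ι} [l.NeBot] {f : ι → E → ℝ} {g : E → ℝ} (hf : ∀ᶠ i in l, ConvexOn ℝ s (f i))
    (hg : ∀ x ∈ s, Tendsto (fun i => f i x) l (𝓝 (g x))) : ConvexOn ℝ s g := by
  obtain ⟨i, hi⟩ := hf.exists
  refine ⟨hi.1, fun x hx y hy a b ha hb hab => ?_⟩
  exact le_of_tendsto_of_tendsto (hg _ (hi.1 hx hy ha hb hab))
    (((hg x hx).const_smul a).add ((hg y hy).const_smul b))
    (hf.mono fun i hi => hi.2 hx hy ha hb hab)

theorem convexOn_finsetSum {ι E : Type*} [AddCommGroup E] [Module ℝ E] {s : Set E}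
    (hs : Convex ℝ s) {t : Finset ι} {f : ι → E → ℝ} (hf : ∀ i ∈ t, ConvexOn ℝ s (f i)) :
    ConvexOn ℝ s (fun x => ∑ i ∈ t, f i x) := by
  simpa only [← Finset.sum_apply] using
    Finset.sum_induction f (ConvexOn ℝ s) (fun _ _ => ConvexOn.add) (convexOn_const 0 hs) hf

theorem convexOn_three_mul_log_sub_log (c : ℝ) :
    ConvexOn ℝ (Ioo 0 c) (fun p => 3 * log (c - p / 2) - log (c - p)) := by
  have hpos : ∀ p ∈ Ioo 0 c, 0 < c - p ∧ 0 < c - p / 2 := fun p hp => by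
    constructor <;> linarith [hp.1, hp.2]
  have hf' : ∀ p ∈ Ioo 0 c, HasDerivAt (fun p => 3 * log (c - p / 2) - log (c - p))
      ((c - p)⁻¹ - 3 / 2 * (c - p / 2)⁻¹) p := fun p hp => by
    obtain ⟨h1, h2⟩ := hpos p hp
    refine (((((hasDerivAt_id' p).div_const 2).const_sub c).log h2.ne').const_mul 3).fun_sub
      (((hasDerivAt_id' p).const_sub c).log h1.ne') |>.congr_deriv ?_
    field_simp
    ring
  have hf'' : ∀ p ∈ Ioo 0 c, HasDerivAt (fun p => (c - p)⁻¹ - 3 / 2 * (c - p / 2)⁻¹)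
      (((c - p) ^ 2)⁻¹ - 3 / 4 * ((c - p / 2) ^ 2)⁻¹) p := fun p hp => by
    obtain ⟨h1, h2⟩ := hpos p hp
    refine (((hasDerivAt_id' p).const_sub c).inv h1.ne').fun_sub
      ((((hasDerivAt_id' p).div_const 2).const_sub c).inv h2.ne' |>.const_mul (3 / 2))
      |>.congr_deriv ?_
    field_simp
    ring
  refine convexOn_of_hasDerivWithinAt2_nonneg (convex_Ioo 0 c)
    (fun p hp => (hf' p hp).continuousAt.continuousWithinAt)
    (fun p hp => (hf' p (interior_subset hp)).hasDerivWithinAt)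
    (fun p hp => (hf'' p (interior_subset hp)).hasDerivWithinAt) fun p hp => ?_
  rw [interior_Ioo] at hp
  obtain ⟨h1, h2⟩ := hpos p hp
  have key : 3 * (c - p) ^ 2 ≤ 4 * (c - p / 2) ^ 2 := by nlinarith [hp.1, hp.2]
  rw [sub_nonneg, ← div_eq_mul_inv, div_le_iff₀ (by positivity), inv_mul_eq_div,
    le_div_iff₀ (by positivity)]
  linarith

theorem logGammaSeq_one_sub_sub_three_mul (n : ℕ) (p : ℝ) :
    p / 2 * log 2 + logGammaSeq (1 - p) n - 3 * logGammaSeq (1 - p / 2) n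
      = (log 2 + log n) / 2 * p
        + ∑ m ∈ Finset.range (n + 1), (3 * log ((m + 1 : ℝ) - p / 2) - log ((m + 1 : ℝ) - p))
        - 2 * (log n + log n !) := by
  have e1 : ∀ m : ℕ, (1 - p + m) = (m + 1 : ℝ) - p := fun m => by ring
  have e2 : ∀ m : ℕ, (1 - p / 2 + m) = (m + 1 : ℝ) - p / 2 := fun m => by ring
  simp only [logGammaSeq, e1, e2, Finset.sum_sub_distrib, ← Finset.mul_sum]
  ring

theorem convexOn_logGammaSeq_one_sub_sub_three_mul (n : ℕ) :
    ConvexOn ℝ (Ioo 0 1)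
      (fun p => p / 2 * log 2 + logGammaSeq (1 - p) n - 3 * logGammaSeq (1 - p / 2) n) := by
  have hsum := convexOn_finsetSum (convex_Ioo 0 1) (t := Finset.range (n + 1)) fun m _ =>
    (convexOn_three_mul_log_sub_log ((m : ℝ) + 1)).subset
      (Ioo_subset_Ioo_right (by linarith [m.cast_nonneg (α := ℝ)])) (convex_Ioo 0 1)
  refine ((((LinearMap.mul ℝ ℝ ((log 2 + log n) / 2)).convexOn (convex_Ioo 0 1)).add hsum).add_const
    (-(2 * (log n + log n !)))).congr fun p _ => ?_
  simp only [logGammaSeq_one_sub_sub_three_mul, LinearMap.mul_apply', Pi.add_apply]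
  ring

theorem log_D_eq {p : ℝ} (hp : p < 1) :
    log (D p) = p / 2 * log 2 + log (Gamma (1 - p)) - 3 * log (Gamma (1 - p / 2)) := by
  have hΓ₁ : 0 < Gamma (1 - p) := Gamma_pos_of_pos (by linarith)
  have hΓ₂ : 0 < Gamma (1 - p / 2) := Gamma_pos_of_pos (by linarith)
  rw [D, log_div (by positivity) (by positivity), log_mul (by positivity) hΓ₁.ne',
    log_rpow two_pos, log_pow]
  push_cast
  ring

theorem stmt3 : ConvexOn ℝ (Set.Ioo (0:ℝ) 1) (fun p => Real.log (D p)) := by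
  refine convexOn_of_tendsto (l := atTop)
    (Eventually.of_forall convexOn_logGammaSeq_one_sub_sub_three_mul) fun p hp => ?_
  rw [log_D_eq hp.2]
  exact (tendsto_const_nhds.add (tendsto_log_gamma (by linarith [hp.2]))).sub
    ((tendsto_log_gamma (by linarith [hp.2])).const_mul 3)
end

section
/- For 0 < p < 1 and 0 ≤ x ≤ 1, the identity E|1 + √x ξ|^{-p} = Σ_{k=0}^∞ (binom(-p/2, k))² x^k holds, where ξ is uniform on the unit circle in ℂ. -/
open Real Complex

/-- Generalized binomial coefficient `r choose k`. -/
noncomputable def genBinom (r : ℝ) (k : ℕ) : ℝ :=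
  (∏ i ∈ Finset.range k, (r - i)) / (Nat.factorial k)

/-!
Put `g(t) = (1 + √x e^{it})^{-p/2}`, so that `|g(t)|² = |1 + √x e^{it}|^{-p}` and the left-hand
side is the normalized squared `L²(0, 2π)` norm of `g`. By Parseval it equals the sum of the
squared moduli of the Fourier coefficients of `g`. For `x < 1` the binomial series
`g(t) = ∑ binom(-p/2, k) x^{k/2} e^{ikt}` converges absolutely and can be integrated termwise, so
these coefficients are `binom(-p/2, k) x^{k/2}` for `k ≥ 0` and `0` for `k < 0`. For `x = 1` they
are obtained as limits `x → 1⁻` by dominated convergence: on `[0, 2π]` one has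
`|1 + b e^{it}| ≥ |t - π| / π` for every `b ≥ 0`, and `|t - π|^{-p}` is integrable as `p < 1`.
-/

open Filter Topology MeasureTheory

theorem genBinom_eq_choose (r : ℝ) (k : ℕ) : genBinom r k = Ring.choose r k := by
  rw [genBinom, Ring.choose_eq_smul, smul_eq_mul, ← Polynomial.aeval_eq_smeval,
    Polynomial.aeval_def, ← Polynomial.eval_map, descPochhammer_map,
    descPochhammer_eval_eq_prod_range, inv_mul_eq_div]

theorem hasSum_genBinom_mul_pow (r : ℝ) {z : ℂ} (hz : ‖z‖ < 1) :
    HasSum (fun k => (genBinom r k : ℂ) * z ^ k) ((1 + z) ^ (r : ℂ)) := by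
  have h := Complex.one_add_cpow_hasFPowerSeriesOnBall_zero (a := r).hasSum
    (y := z) (by simpa [← ofReal_norm] using hz)
  simpa [genBinom_eq_choose, binomialSeries, mul_comm, ← Complex.ofReal_choose] using h

theorem summable_norm_genBinom_mul_pow (r : ℝ) {z : ℂ} (hz : ‖z‖ < 1) :
    Summable fun k => ‖(genBinom r k : ℂ) * z ^ k‖ := by
  have h := (binomialSeries ℂ (r : ℂ)).summable_norm_apply (x := z)
    (lt_of_lt_of_le (by simpa [← ofReal_norm] using hz) binomialSeries_radius_ge_one)
  simpa [genBinom_eq_choose, binomialSeries, mul_comm, ← Complex.ofReal_choose] using h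

theorem integral_exp_int_mul_I (m : ℤ) :
    ∫ t in (0:ℝ)..2 * π, exp (m * t * I) = if m = 0 then (2 * π : ℂ) else 0 := by
  split_ifs with hm
  · simp [hm]
  · have hc : (m : ℂ) * I ≠ 0 := mul_ne_zero (by exact_mod_cast hm) I_ne_zero
    have h := integral_exp_mul_complex (a := 0) (b := 2 * π) hc
    simp only [mul_right_comm _ I] at h
    have h2π : (m : ℂ) * ((2 * π : ℝ) : ℂ) * I = m * (2 * π * I) := by push_cast; ring
    rw [h, h2π, exp_int_mul_two_pi_mul_I]
    simp

theorem fourierCoeffOn_eq_integral_exp (f : ℝ → ℂ) (n : ℤ) :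
    fourierCoeffOn two_pi_pos f n
      = (2 * π : ℂ)⁻¹ * ∫ t in (0:ℝ)..2 * π, exp (-n * t * I) * f t := by
  rw [fourierCoeffOn_eq_integral]
  simp only [fourier_coe_apply, sub_zero, one_div, real_smul]
  push_cast
  congr 2
  funext t
  congr 2
  field_simp

theorem hasSum_fourierCoeffOn_of_hasSum {b : ℕ → ℂ} {f : ℝ → ℂ} (hb : Summable fun k => ‖b k‖)
    (hf : ∀ t : ℝ, HasSum (fun k => b k * exp (k * t * I)) (f t)) (n : ℤ) :
    HasSum (fun k : ℕ => if (k : ℤ) = n then b k else 0) (fourierCoeffOn two_pi_pos f n) := by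
  have hterm : ∀ k : ℕ,
      (2 * π : ℂ)⁻¹ * ∫ t in (0:ℝ)..2 * π, exp (-n * t * I) * (b k * exp (k * t * I))
        = if (k : ℤ) = n then b k else 0 := by
    intro k
    have h : ∀ t : ℝ, exp (-n * t * I) * (b k * exp (k * t * I))
        = b k * exp (((k - n : ℤ) : ℂ) * t * I) := by
      intro t
      rw [mul_left_comm, ← Complex.exp_add]
      push_cast
      ring_nf
    simp_rw [h, intervalIntegral.integral_const_mul, integral_exp_int_mul_I, sub_eq_zero]
    split_ifs
    · field_simp
    · simp
  have hsum := intervalIntegral.hasSum_integral_of_dominated_convergence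
    (μ := volume) (a := 0) (b := 2 * π) (fun k _ => ‖b k‖) (fun k => by fun_prop)
    (fun k => ae_of_all _ fun t _ => by simp [Complex.norm_exp])
    (ae_of_all _ fun _ _ => hb) intervalIntegrable_const
    (ae_of_all _ fun t _ => (hf t).mul_left (exp (-n * t * I)))
  rw [fourierCoeffOn_eq_integral_exp]
  simpa only [hterm] using hsum.mul_left (2 * π : ℂ)⁻¹

theorem fourierCoeffOn_eq_extend_of_hasSum {b : ℕ → ℂ} {f : ℝ → ℂ} (hb : Summable fun k => ‖b k‖)
    (hf : ∀ t : ℝ, HasSum (fun k => b k * exp (k * t * I)) (f t)) :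
    fourierCoeffOn two_pi_pos f = Function.extend ((↑) : ℕ → ℤ) b 0 := by
  funext n
  refine (hasSum_fourierCoeffOn_of_hasSum hb hf n).unique ?_
  by_cases hn : n ∈ Set.range ((↑) : ℕ → ℤ)
  · obtain ⟨m, rfl⟩ := hn
    rw [Nat.cast_injective.extend_apply]
    convert hasSum_ite_eq m (b m) using 2 with k
    simp only [Nat.cast_inj]
    split_ifs with h <;> simp [h]
  · rw [Function.extend_apply' _ _ _ fun ⟨k, hk⟩ => hn ⟨k, hk⟩, Pi.zero_apply]
    convert hasSum_zero with k
    exact if_neg fun hk => hn ⟨k, hk⟩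

theorem norm_one_add_mul_exp_sq (b t : ℝ) :
    ‖1 + b * exp (t * I)‖ ^ 2 = (b + Real.cos t) ^ 2 + Real.sin t ^ 2 := by
  rw [Complex.sq_norm, Complex.normSq_apply]
  simp only [add_re, add_im, one_re, one_im, mul_re, mul_im, ofReal_re, ofReal_im,
    exp_ofReal_mul_I_re, exp_ofReal_mul_I_im]
  linear_combination (b ^ 2 - 1) * Real.sin_sq_add_cos_sq t

theorem abs_sub_pi_div_pi_le_norm_one_add_mul_exp {b t : ℝ} (hb : 0 ≤ b)
    (ht : t ∈ Set.Icc 0 (2 * π)) :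
    |t - π| / π ≤ ‖1 + b * exp (t * I)‖ := by
  have hu : |t - π| ≤ π := abs_le.mpr ⟨by linarith [ht.1], by linarith [ht.2]⟩
  have hcos : Real.cos t = -Real.cos |t - π| := by rw [Real.cos_abs, Real.cos_sub_pi, neg_neg]
  have hsin : |Real.sin t| = |Real.sin (t - π)| := by rw [Real.sin_sub_pi, abs_neg]
  have hsq := norm_one_add_mul_exp_sq b t
  -- Away from `π` the cosine is nonnegative and the norm is `≥ 1`; near `π` the norm is
  -- `≥ |sin t|`, which Jordan's inequality bounds below by `2 |t - π| / π`.
  have hle : (|t - π| / π) ^ 2 ≤ ‖1 + b * exp (t * I)‖ ^ 2 := by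
    rcases le_or_gt (π / 2) |t - π| with hfar | hnear
    · have : Real.cos |t - π| ≤ 0 := Real.cos_nonpos_of_pi_div_two_le_of_le hfar (by linarith)
      have : (|t - π| / π) ^ 2 ≤ 1 := by
        rw [div_pow, div_le_one (by positivity)]
        exact pow_le_pow_left₀ (abs_nonneg _) hu 2
      nlinarith [Real.sin_sq_add_cos_sq t]
    · have hj := Real.mul_abs_le_abs_sin hnear.le
      rw [← hsin] at hj
      have : |t - π| / π ≤ 2 / π * |t - π| := by
        rw [div_mul_eq_mul_div]; gcongr; linarith [abs_nonneg (t - π)]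
      have := pow_le_pow_left₀ (by positivity) (this.trans hj) 2
      rw [sq_abs] at this
      nlinarith [sq_nonneg (b + Real.cos t)]
  exact (pow_le_pow_iff_left₀ (by positivity) (norm_nonneg _) two_ne_zero).mp hle

theorem intervalIntegrable_abs_rpow {s : ℝ} (hs : -1 < s) (a b : ℝ) :
    IntervalIntegrable (fun u : ℝ => |u| ^ s) volume a b := by
  have hpos : ∀ c, 0 ≤ c → IntervalIntegrable (fun u : ℝ => |u| ^ s) volume 0 c := by
    intro c hc
    refine (intervalIntegral.intervalIntegrable_rpow' hs).congr_ae ?_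
    filter_upwards [ae_restrict_mem measurableSet_uIoc] with u hu
    rw [Set.uIoc_of_le hc] at hu
    rw [abs_of_pos hu.1]
  have hall : ∀ c, IntervalIntegrable (fun u : ℝ => |u| ^ s) volume 0 c := by
    intro c
    rcases le_total 0 c with hc | hc
    · exact hpos c hc
    · simpa using (IntervalIntegrable.iff_comp_neg (a := 0) (b := -c)).mp (hpos (-c) (by linarith))
  exact (hall a).symm.trans (hall b)

theorem intervalIntegrable_abs_sub_pi_div_pi_rpow {s : ℝ} (hs : -1 < s) :
    IntervalIntegrable (fun t : ℝ => (|t - π| / π) ^ s) volume 0 (2 * π) := by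
  have h := (intervalIntegrable_abs_rpow hs (-π) π).comp_sub_right π
  rw [neg_add_cancel, ← two_mul] at h
  simpa only [div_rpow (abs_nonneg _) pi_pos.le] using h.div_const (π ^ s)

theorem one_add_mem_slitPlane {w : ℂ} (hw : ‖w‖ ≤ 1) (h : 1 + w ≠ 0) :
    1 + w ∈ slitPlane := by
  rw [mem_slitPlane_iff]
  by_contra! hre
  have hre' : w.re ≤ -1 := by simp at hre; linarith [hre.1]
  have : -1 ≤ w.re := neg_le_of_abs_le ((abs_re_le_norm w).trans hw)
  exact h (Complex.ext (by simp; linarith) (by simpa using hre.2))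

noncomputable def onePlusExpPow (r a t : ℝ) : ℂ := (1 + a * exp (t * I)) ^ (r : ℂ)

theorem norm_onePlusExpPow (r a t : ℝ) :
    ‖onePlusExpPow r a t‖ = ‖1 + a * exp (t * I)‖ ^ r :=
  norm_cpow_real _ _

theorem measurable_onePlusExpPow (r a : ℝ) : Measurable (onePlusExpPow r a) := by
  unfold onePlusExpPow; fun_prop

theorem norm_onePlusExpPow_le {r a t : ℝ} (hr : r ≤ 0) (ha : 0 ≤ a)
    (ht : t ∈ Set.Icc 0 (2 * π)) (htπ : t ≠ π) :
    ‖onePlusExpPow r a t‖ ≤ (|t - π| / π) ^ r := by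
  have : 0 < |t - π| / π := div_pos (abs_pos.mpr (sub_ne_zero.mpr htπ)) pi_pos
  rw [norm_onePlusExpPow]
  exact rpow_le_rpow_of_nonpos this (abs_sub_pi_div_pi_le_norm_one_add_mul_exp ha ht) hr

theorem continuousAt_onePlusExpPow {r t : ℝ} (ht : t ∈ Set.Icc 0 (2 * π)) (htπ : t ≠ π) :
    ContinuousAt (fun a => onePlusExpPow r a t) 1 := by
  have hne : 1 + exp (t * I) ≠ 0 := by
    intro h0
    have := abs_sub_pi_div_pi_le_norm_one_add_mul_exp zero_le_one ht
    simp only [ofReal_one, one_mul, h0, norm_zero] at this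
    exact this.not_gt (div_pos (abs_pos.mpr (sub_ne_zero.mpr htπ)) pi_pos)
  have hslit := one_add_mem_slitPlane (by simp [norm_exp_ofReal_mul_I]) hne
  refine (continuousAt_cpow_const (b := (r : ℂ)) (by simpa using hslit)).comp ?_
  fun_prop

theorem hasSum_onePlusExpPow (r : ℝ) {a : ℝ} (ha0 : 0 ≤ a) (ha1 : a < 1) (t : ℝ) :
    HasSum (fun k : ℕ => (genBinom r k * a ^ k : ℂ) * exp (k * t * I))
      (onePlusExpPow r a t) := by
  have hz : ‖(a : ℂ) * exp (t * I)‖ < 1 := by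
    simpa [norm_exp_ofReal_mul_I, abs_of_nonneg ha0] using ha1
  unfold onePlusExpPow
  convert hasSum_genBinom_mul_pow r hz using 2 with k
  rw [mul_pow, ← Complex.exp_nat_mul, mul_assoc, mul_assoc (k : ℂ)]

theorem fourierCoeffOn_onePlusExpPow_of_lt_one (r : ℝ) {a : ℝ} (ha0 : 0 ≤ a) (ha1 : a < 1) :
    fourierCoeffOn two_pi_pos (onePlusExpPow r a)
      = Function.extend ((↑) : ℕ → ℤ) (fun k => (genBinom r k * a ^ k : ℂ)) 0 := by
  refine fourierCoeffOn_eq_extend_of_hasSum ?_ (hasSum_onePlusExpPow r ha0 ha1)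
  have ha : ‖(a : ℂ)‖ < 1 := by simpa [abs_of_nonneg ha0] using ha1
  simpa using summable_norm_genBinom_mul_pow r ha

theorem tendsto_fourierCoeffOn_onePlusExpPow {r : ℝ} (hr : -1 < r) (hr0 : r ≤ 0) (n : ℤ) :
    Tendsto (fun a => fourierCoeffOn two_pi_pos (onePlusExpPow r a) n) (𝓝[<] 1)
      (𝓝 (fourierCoeffOn two_pi_pos (onePlusExpPow r 1) n)) := by
  have hIcc : ∀ t ∈ Set.uIoc 0 (2 * π), t ∈ Set.Icc 0 (2 * π) := fun t ht =>
    Set.uIcc_of_le two_pi_pos.le ▸ Set.uIoc_subset_uIcc ht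
  simp only [fourierCoeffOn_eq_integral_exp]
  refine Tendsto.const_mul _ <|
    intervalIntegral.tendsto_integral_filter_of_dominated_convergence _ ?_ ?_
      (intervalIntegrable_abs_sub_pi_div_pi_rpow hr) ?_
  · exact Eventually.of_forall fun a =>
      ((by fun_prop : Measurable fun t : ℝ => exp (-n * t * I)).mul
        (measurable_onePlusExpPow r a)).aestronglyMeasurable
  · filter_upwards [Ioo_mem_nhdsLT zero_lt_one] with a ha
    filter_upwards [Measure.ae_ne volume π] with t htπ ht
    have hexp : ‖exp (-n * t * I)‖ = 1 := by simp [Complex.norm_exp]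
    rw [norm_mul, hexp, one_mul]
    exact norm_onePlusExpPow_le hr0 ha.1.le (hIcc t ht) htπ
  · filter_upwards [Measure.ae_ne volume π] with t htπ ht
    exact ((continuousAt_onePlusExpPow (hIcc t ht) htπ).const_mul _).tendsto.mono_left
      nhdsWithin_le_nhds

theorem fourierCoeffOn_onePlusExpPow {r a : ℝ} (hr : -1 < r) (hr0 : r ≤ 0) (ha0 : 0 ≤ a)
    (ha1 : a ≤ 1) :
    fourierCoeffOn two_pi_pos (onePlusExpPow r a)
      = Function.extend ((↑) : ℕ → ℤ) (fun k => (genBinom r k * a ^ k : ℂ)) 0 := by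
  rcases ha1.lt_or_eq with ha1 | rfl
  · exact fourierCoeffOn_onePlusExpPow_of_lt_one r ha0 ha1
  funext n
  have hcoeff : Continuous fun a : ℝ =>
      Function.extend ((↑) : ℕ → ℤ) (fun k => (genBinom r k * a ^ k : ℂ)) 0 n := by
    by_cases hn : n ∈ Set.range ((↑) : ℕ → ℤ)
    · obtain ⟨m, rfl⟩ := hn
      simp only [Nat.cast_injective.extend_apply]
      fun_prop
    · simp only [Function.extend_apply' _ _ _ fun ⟨k, hk⟩ => hn ⟨k, hk⟩]
      exact continuous_const
  refine tendsto_nhds_unique (tendsto_fourierCoeffOn_onePlusExpPow hr hr0 n)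
    (((hcoeff.tendsto 1).mono_left nhdsWithin_le_nhds).congr' ?_)
  filter_upwards [Ioo_mem_nhdsLT zero_lt_one] with a ha
  rw [fourierCoeffOn_onePlusExpPow_of_lt_one r ha.1.le ha.2]

theorem memLp_onePlusExpPow {r a : ℝ} (hr : -1 / 2 < r) (hr0 : r ≤ 0) (ha : 0 ≤ a) :
    MemLp (onePlusExpPow r a) 2 (volume.restrict (Set.Ioc 0 (2 * π))) := by
  refine (memLp_two_iff_integrable_sq_norm
    (measurable_onePlusExpPow r a).aestronglyMeasurable).mpr ?_
  have hint := intervalIntegrable_abs_sub_pi_div_pi_rpow (s := r * 2) (by linarith)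
  rw [intervalIntegrable_iff_integrableOn_Ioc_of_le two_pi_pos.le] at hint
  refine hint.mono' ((measurable_onePlusExpPow r a).norm.pow_const 2).aestronglyMeasurable ?_
  filter_upwards [ae_restrict_mem measurableSet_Ioc,
    ae_restrict_of_ae (Measure.ae_ne volume π)] with t ht htπ
  rw [norm_pow, norm_norm, show r * 2 = r * (2 : ℕ) by norm_num, rpow_mul_natCast (by positivity)]
  exact pow_le_pow_left₀ (norm_nonneg _)
    (norm_onePlusExpPow_le hr0 ha (Set.Ioc_subset_Icc_self ht) htπ) 2

theorem hasSum_genBinom_sq_mul_pow {r x : ℝ} (hr : -1 / 2 < r) (hr0 : r ≤ 0) (hx0 : 0 ≤ x)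
    (hx1 : x ≤ 1) :
    HasSum (fun k => genBinom r k ^ 2 * x ^ k)
      ((2 * π)⁻¹ * ∫ t in (0:ℝ)..2 * π, ‖1 + √x * exp (t * I)‖ ^ (2 * r)) := by
  have hparseval :=
    hasSum_sq_fourierCoeffOn two_pi_pos (memLp_onePlusExpPow hr hr0 (sqrt_nonneg x))
  rw [fourierCoeffOn_onePlusExpPow (by linarith) hr0 (sqrt_nonneg x) (sqrt_le_one.mpr hx1)]
    at hparseval
  have hnat := (Nat.cast_injective.hasSum_iff fun n hn => ?_).mpr hparseval
  · convert hnat using 1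
    · funext k
      simp only [Function.comp_apply, Nat.cast_injective.extend_apply, norm_mul, norm_pow,
        norm_real, Real.norm_eq_abs, abs_of_nonneg (sqrt_nonneg x), mul_pow, sq_abs]
      rw [← pow_mul, mul_comm k 2, pow_mul, sq_sqrt hx0]
    · rw [sub_zero, smul_eq_mul]
      congr 1
      refine intervalIntegral.integral_congr fun t _ => ?_
      rw [norm_onePlusExpPow, ← rpow_natCast, ← rpow_mul (norm_nonneg _)]
      congr 1
      push_cast
      ring
  · simp [Function.extend_apply' _ _ _ hn]

/-- The expectation `E|1 + √x ξ|^{-p}` for `ξ` uniform on the unit circle,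
written as `(1/2π) ∫_0^{2π} |1 + √x e^{it}|^{-p} dt`. -/
theorem stmt8 (p x : ℝ) (hp0 : 0 < p) (hp1 : p < 1) (hx0 : 0 ≤ x) (hx1 : x ≤ 1) :
    (1 / (2 * Real.pi)) *
        ∫ t in (0:ℝ)..(2 * Real.pi),
          ‖1 + (Real.sqrt x : ℂ) * Complex.exp (t * Complex.I)‖ ^ (-p)
      = ∑' k : ℕ, genBinom (-p / 2) k ^ 2 * x ^ k := by
  have h := hasSum_genBinom_sq_mul_pow (r := -p / 2) (by linarith) (by linarith) hx0 hx1
  rw [h.tsum_eq, one_div, show 2 * (-p / 2) = -p by ring]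
end

section
/- For 0 < p < 1, E|(ξ₁ + ξ₂)/√2|^{-p} = 2^{p/2} Γ(1-p) / Γ(1-p/2)², where ξ₁, ξ₂ are independent and uniform on the unit circle in ℂ. -/
/-!
Since `|e^{is} + e^{it}| = 2 |cos ((s - t) / 2)|`, the inner integral is the integral of a
`2π`-periodic function of `s - t` over a full period, hence independent of `s`; it equals
`2 ∫₀^π sin^{-p}`. The substitution `x = (1 - cos w) / 2` turns `∫₀^π sin^r` into
`2^r B((r + 1) / 2, (r + 1) / 2)`, and Legendre's duplication formula rewrites the resulting
Gamma quotient in the stated form.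
-/

open Real Complex MeasureTheory Set intervalIntegral

theorem norm_exp_mul_I_add_exp_mul_I (s t : ℝ) :
    ‖Complex.exp (s * I) + Complex.exp (t * I)‖ = 2 * |Real.cos ((s - t) / 2)| := by
  have h : Complex.exp (s * I) + Complex.exp (t * I) =
      Complex.exp (((s + t) / 2 : ℝ) * I) * ((2 * Real.cos ((s - t) / 2) : ℝ) : ℂ) := by
    push_cast
    rw [Complex.cos, mul_div_cancel₀ _ two_ne_zero, mul_add, ← Complex.exp_add,
      ← Complex.exp_add]
    congr 2 <;> ring
  rw [h, norm_mul, Complex.norm_exp_ofReal_mul_I, Complex.norm_real, Real.norm_eq_abs, abs_mul,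
    abs_two, one_mul]

theorem norm_exp_mul_I_add_exp_mul_I_div_sqrt_two (s t : ℝ) :
    ‖(Complex.exp (s * I) + Complex.exp (t * I)) / (√2 : ℂ)‖ = √2 * |Real.cos ((s - t) / 2)| := by
  have hsqrt2 : (2 : ℝ) / √2 = √2 := by
    rw [div_eq_iff (by positivity), Real.mul_self_sqrt zero_le_two]
  rw [norm_div, norm_exp_mul_I_add_exp_mul_I, Complex.norm_of_nonneg (Real.sqrt_nonneg 2),
    mul_div_right_comm, hsqrt2]

theorem integral_rpow_mul_one_sub_rpow {a b : ℝ} (ha : 0 < a) (hb : 0 < b) :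
    ∫ x in (0 : ℝ)..1, x ^ (a - 1) * (1 - x) ^ (b - 1) =
      Real.Gamma a * Real.Gamma b / Real.Gamma (a + b) := by
  apply Complex.ofReal_injective
  push_cast
  rw [← Complex.Gamma_ofReal, ← Complex.Gamma_ofReal, ← Complex.Gamma_ofReal, Complex.ofReal_add,
    ← Complex.betaIntegral_eq_Gamma_mul_div _ _ (by simpa) (by simpa), Complex.betaIntegral,
    ← intervalIntegral.integral_ofReal]
  refine intervalIntegral.integral_congr fun x hx => ?_
  rw [uIcc_of_le zero_le_one] at hx
  push_cast
  rw [Complex.ofReal_cpow hx.1, Complex.ofReal_cpow (sub_nonneg.2 hx.2)]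
  push_cast
  ring_nf

theorem image_one_sub_cos_div_two_Ioo :
    (fun w => (1 - Real.cos w) / 2) '' Ioo 0 π = Ioo 0 1 := by
  ext y
  constructor
  · rintro ⟨w, ⟨hw0, hwπ⟩, rfl⟩
    have h1 : Real.cos w < 1 := by
      simpa using Real.strictAntiOn_cos (left_mem_Icc.2 pi_pos.le) ⟨hw0.le, hwπ.le⟩ hw0
    have h2 : -1 < Real.cos w := by
      simpa using Real.strictAntiOn_cos ⟨hw0.le, hwπ.le⟩ (right_mem_Icc.2 pi_pos.le) hwπ
    constructor <;> linarith
  · rintro ⟨hy0, hy1⟩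
    refine ⟨Real.arccos (1 - 2 * y), ⟨Real.arccos_pos.2 (by linarith),
      Real.arccos_lt_pi.2 (by linarith)⟩, ?_⟩
    show (1 - Real.cos _) / 2 = y
    rw [Real.cos_arccos (by linarith) (by linarith)]
    ring

theorem integral_sin_rpow {r : ℝ} (hr : -1 < r) :
    ∫ x in (0 : ℝ)..π, Real.sin x ^ r =
      2 ^ r * Real.Gamma ((r + 1) / 2) ^ 2 / Real.Gamma (r + 1) := by
  set a := (r + 1) / 2 with ha
  have hderiv : ∀ w ∈ Ioo 0 π,
      HasDerivWithinAt (fun w => (1 - Real.cos w) / 2) (Real.sin w / 2) (Ioo 0 π) w := fun w _ =>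
    by simpa using (((Real.hasDerivAt_cos w).const_sub 1).div_const 2).hasDerivWithinAt
  have hinj : InjOn (fun w => (1 - Real.cos w) / 2) (Ioo 0 π) := fun x hx y hy hxy =>
    Real.injOn_cos (Ioo_subset_Icc_self hx) (Ioo_subset_Icc_self hy) (by simpa using hxy)
  have hsubst := integral_image_eq_integral_abs_deriv_smul measurableSet_Ioo hderiv hinj
    (fun y => y ^ (a - 1) * (1 - y) ^ (a - 1))
  rw [image_one_sub_cos_div_two_Ioo, ← integral_Ioc_eq_integral_Ioo,
    ← intervalIntegral.integral_of_le zero_le_one,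
    integral_rpow_mul_one_sub_rpow (by linarith) (by linarith)] at hsubst
  have hintegrand : EqOn
      (fun w => |Real.sin w / 2| • (((1 - Real.cos w) / 2) ^ (a - 1) *
        (1 - (1 - Real.cos w) / 2) ^ (a - 1)))
      (fun w => Real.sin w ^ r / 2 ^ r) (Ioo 0 π) := by
    intro w hw
    have hsin : 0 < Real.sin w / 2 := half_pos (Real.sin_pos_of_pos_of_lt_pi hw.1 hw.2)
    have hprod : (1 - Real.cos w) / 2 * (1 - (1 - Real.cos w) / 2) = (Real.sin w / 2) ^ 2 := by
      linear_combination (-1 / 4 : ℝ) * Real.sin_sq_add_cos_sq w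
    simp only [smul_eq_mul]
    rw [← Real.mul_rpow (by nlinarith [Real.cos_le_one w]) (by nlinarith [Real.neg_one_le_cos w]),
      hprod, abs_of_pos hsin, ← Real.rpow_natCast, ← Real.rpow_mul hsin.le,
      mul_comm, ← Real.rpow_add_one hsin.ne', Real.div_rpow (by linarith) zero_le_two,
      Nat.cast_ofNat, show 2 * (a - 1) + 1 = r by rw [ha]; ring]
  rw [setIntegral_congr_fun measurableSet_Ioo hintegrand, MeasureTheory.integral_div,
    ← integral_Ioc_eq_integral_Ioo, ← intervalIntegral.integral_of_le pi_pos.le,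
    show a + a = r + 1 by linarith, eq_div_iff (by positivity)] at hsubst
  rw [← hsubst]
  ring

theorem integral_abs_cos_half_sub_rpow (r s : ℝ) :
    ∫ t in (0 : ℝ)..2 * π, |Real.cos ((s - t) / 2)| ^ r = 2 * ∫ x in (0 : ℝ)..π, Real.sin x ^ r := by
  set g : ℝ → ℝ := fun u => |Real.cos (u / 2)| ^ r with hg
  have hper : Function.Periodic g (2 * π) := fun u => by
    simp only [hg, add_div, mul_div_cancel_left₀ _ (two_ne_zero' ℝ), Real.cos_add_pi, abs_neg]
  calc ∫ t in (0 : ℝ)..2 * π, g (s - t)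
      = ∫ u in (s - 2 * π)..(s - 2 * π) + 2 * π, g u := by
        rw [integral_comp_sub_left, sub_zero, sub_add_cancel]
    _ = ∫ u in π..π + 2 * π, g u := hper.intervalIntegral_add_eq _ _
    _ = ∫ w in (0 : ℝ)..2 * π, g (w + π) := by
        rw [integral_comp_add_right, zero_add, add_comm (2 * π)]
    _ = ∫ w in (0 : ℝ)..2 * π, |Real.sin (w / 2)| ^ r := by
        refine integral_congr fun w _ => ?_
        simp only [hg, add_div, Real.cos_add_pi_div_two, abs_neg]
    _ = 2 * ∫ x in (0 : ℝ)..π, |Real.sin x| ^ r := by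
        rw [integral_comp_div (fun x => |Real.sin x| ^ r) two_ne_zero, zero_div,
          mul_div_cancel_left₀ _ two_ne_zero, smul_eq_mul]
    _ = 2 * ∫ x in (0 : ℝ)..π, Real.sin x ^ r := by
        congr 1
        refine integral_congr fun x hx => ?_
        rw [uIcc_of_le pi_pos.le] at hx
        simp only [abs_of_nonneg (Real.sin_nonneg_of_mem_Icc hx)]

theorem stmt9_general (p : ℝ) (hp1 : p < 1) :
    (1 / (2 * Real.pi)) ^ 2 *
        ∫ s in (0:ℝ)..(2 * Real.pi), ∫ t in (0:ℝ)..(2 * Real.pi),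
          ‖(Complex.exp (s * Complex.I) + Complex.exp (t * Complex.I)) /
            (Real.sqrt 2 : ℂ)‖ ^ (-p)
      = 2 ^ (p / 2) * Real.Gamma (1 - p) / Real.Gamma (1 - p / 2) ^ 2 := by
  simp_rw [norm_exp_mul_I_add_exp_mul_I_div_sqrt_two,
    Real.mul_rpow (Real.sqrt_nonneg 2) (abs_nonneg _), intervalIntegral.integral_const_mul,
    integral_abs_cos_half_sub_rpow, intervalIntegral.integral_const,
    integral_sin_rpow (by linarith : -1 < -p)]
  have hΓ : Real.Gamma (1 - p / 2) ≠ 0 := (Real.Gamma_pos_of_pos (by linarith)).ne'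
  have hΓ' : Real.Gamma (1 - p) ≠ 0 := (Real.Gamma_pos_of_pos (by linarith)).ne'
  have hduplication : Real.Gamma ((1 - p) / 2) =
      Real.Gamma (1 - p) * 2 ^ p * √π / Real.Gamma (1 - p / 2) := by
    have h := Real.Gamma_mul_Gamma_add_half ((1 - p) / 2)
    rw [show 2 * ((1 - p) / 2) = 1 - p by ring, show (1 - p) / 2 + 1 / 2 = 1 - p / 2 by ring,
      show 1 - (1 - p) = p by ring] at h
    rw [eq_div_iff hΓ, h]
  have hsqrt2_rpow : √2 ^ (-p) = (2 ^ (p / 2))⁻¹ := by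
    rw [Real.sqrt_eq_rpow, ← Real.rpow_mul zero_le_two, ← Real.rpow_neg zero_le_two]
    ring_nf
  have htwo_rpow : (2 : ℝ) ^ p = (2 ^ (p / 2)) ^ 2 := by
    rw [← Real.rpow_natCast, ← Real.rpow_mul zero_le_two]
    norm_num
  rw [show (-p + 1) / 2 = (1 - p) / 2 by ring, neg_add_eq_sub, hduplication,
    Real.rpow_neg zero_le_two, hsqrt2_rpow, htwo_rpow, smul_eq_mul, sub_zero]
  field_simp
  rw [Real.sq_sqrt pi_pos.le]

/-- `E|(ξ₁+ξ₂)/√2|^{-p} = 2^{p/2} Γ(1-p)/Γ(1-p/2)²` for `ξ₁, ξ₂` independent uniform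
on the unit circle, the expectation written as an iterated integral. -/
theorem stmt9 (p : ℝ) (hp0 : 0 < p) (hp1 : p < 1) :
    (1 / (2 * Real.pi)) ^ 2 *
        ∫ s in (0:ℝ)..(2 * Real.pi), ∫ t in (0:ℝ)..(2 * Real.pi),
          ‖(Complex.exp (s * Complex.I) + Complex.exp (t * Complex.I)) /
            (Real.sqrt 2 : ℂ)‖ ^ (-p)
      = 2 ^ (p / 2) * Real.Gamma (1 - p) / Real.Gamma (1 - p / 2) ^ 2 :=
  stmt9_general p hp1
end

section
/- For any probability measure μ and p, s real with 2 ≤ s, the derivative bound d/ds [log(2·b₀^p·(b₀π)^{-s/2} s^{p/2+2}/(s/2 - p))] < -½log(b₀π) + 3/(2s) holds for 0 < p < 1, s > 3 and b₀ = 1.295; in particular this logarithmic derivative is negative for s > 3. -/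
/-! Near `s`, the logarithm splits into `log C - (u/2) log a + q log u - log (u/2 - p)`, whose
derivative is `-(1/2) log a + q/s - 1/(s - 2p)`. For `q = p/2 + 2` and `0 ≤ p < 1` the last two
terms are below `3/(2s)`, and `log (1.295 π) > 1` because `1.295 π > e`; for `s > 3` this makes
the bound negative. -/

open Real Filter Topology

section LogDeriv

variable {C a q p s : ℝ}

theorem log_mul_rpow_mul_rpow_div_eventuallyEq (hC : C ≠ 0) (ha : 0 < a) (hs : 0 < s)
    (hps : 2 * p < s) :
    (fun u => log (C * a ^ (-u / 2) * u ^ q / (u / 2 - p))) =ᶠ[𝓝 s]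
      fun u => log C + -u / 2 * log a + q * log u - log (u / 2 - p) := by
  filter_upwards [eventually_gt_nhds hs, eventually_gt_nhds hps] with u hu hpu
  have hup : u / 2 - p ≠ 0 := by linarith
  rw [log_div (by positivity) hup, log_mul (by positivity) (by positivity),
    log_mul hC (by positivity), log_rpow ha, log_rpow hu]

theorem hasDerivAt_log_mul_rpow_mul_rpow_div (hC : C ≠ 0) (ha : 0 < a) (hs : 0 < s)
    (hps : 2 * p < s) :
    HasDerivAt (fun u => log (C * a ^ (-u / 2) * u ^ q / (u / 2 - p)))
      (-(1 / 2) * log a + q / s - 1 / (s - 2 * p)) s := by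
  have hlin : HasDerivAt (fun u : ℝ => u / 2 - p) (1 / 2) s := by
    simpa using ((hasDerivAt_id s).div_const 2).sub_const p
  have hsum := (((hasDerivAt_const s (log C)).add
    (((hasDerivAt_id s).neg.div_const 2).mul_const (log a))).add
    ((hasDerivAt_log hs.ne').const_mul q)).sub (hlin.log (by linarith))
  refine (hsum.congr_deriv ?_).congr_of_eventuallyEq
    (log_mul_rpow_mul_rpow_div_eventuallyEq hC ha hs hps)
  have : s - 2 * p ≠ 0 := by linarith
  field_simp
  ring

end LogDeriv

theorem add_two_div_sub_one_div_lt {p s : ℝ} (hp0 : 0 ≤ p) (hp1 : p < 1) (hps : 2 * p < s) :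
    (p / 2 + 2) / s - 1 / (s - 2 * p) < 3 / (2 * s) := by
  have hs : 0 < s := by linarith
  have hsp : 0 < s - 2 * p := by linarith
  rw [sub_lt_iff_lt_add, ← sub_lt_iff_lt_add', div_sub_div _ _ hs.ne' (by positivity),
    div_lt_div_iff₀ (by positivity) hsp]
  have hp1' : 0 ≤ p + 1 := by linarith
  nlinarith [mul_pos hs (mul_pos (sub_pos.2 hp1) hs), mul_nonneg hs.le (mul_nonneg hp0 hp1')]

theorem one_lt_log_mul_pi : 1 < log (1.295 * π) := by
  rw [lt_log_iff_exp_lt (by positivity)]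
  nlinarith [exp_one_lt_d9, pi_gt_d2]

theorem stmt18 (p s : ℝ) (hp0 : 0 < p) (hp1 : p < 1) (hs : 3 < s) :
    deriv (fun u : ℝ =>
        Real.log (2 * (1.295 : ℝ) ^ p * (1.295 * Real.pi) ^ (-u / 2) * u ^ (p / 2 + 2) /
          (u / 2 - p))) s
      < -(1 / 2) * Real.log (1.295 * Real.pi) + 3 / (2 * s) ∧
    deriv (fun u : ℝ =>
        Real.log (2 * (1.295 : ℝ) ^ p * (1.295 * Real.pi) ^ (-u / 2) * u ^ (p / 2 + 2) /
          (u / 2 - p))) s < 0 := by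
  have hps : 2 * p < s := by linarith
  rw [(hasDerivAt_log_mul_rpow_mul_rpow_div (by positivity) (by positivity) (by linarith)
    hps).deriv]
  have hbound := add_two_div_sub_one_div_lt hp0.le hp1 hps
  have hsmall : 3 / (2 * s) < 1 / 2 := by
    rw [div_lt_div_iff₀ (by linarith) two_pos]
    linarith
  constructor <;> linarith [one_lt_log_mul_pi]
end

section
/- For t in the interval [3, 12], the absolute derivative of |J_0(t)|³ satisfies |d/dt |J_0(t)|³| = 3 J_0(t)² |J_1(t)| < 0.1. -/
open Real

/-- Bessel function of the first kind of order 1. -/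
noncomputable def besselJ1 (t : ℝ) : ℝ :=
  (1 / Real.pi) * ∫ u in (0:ℝ)..Real.pi, Real.cos (u - t * Real.sin u)

/-!
With `J₀' = -J₁` and the recurrence `J₁' = J₀ - J₁ / t` (integration by parts in the integral
representation), the energy `J₀² + J₁²` has derivative `-2 J₁² / t ≤ 0`, so for `t ≥ 3` it is at
most its value at `3`. That value is below `0.184`: integrating the alternating Taylor bounds of
`cos` and `sin` over the integral representations brackets `J₀ 3` and `J₁ 3` between consecutive
partial sums of their power series. Finally `3 x² y < 0.1` whenever `x² + y² ≤ 0.184`, `y ≥ 0`.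
-/

open Finset Nat intervalIntegral

noncomputable def cosTaylor (n : ℕ) (x : ℝ) : ℝ :=
  ∑ k ∈ range n, (-1) ^ k * x ^ (2 * k) / (2 * k)!

noncomputable def sinTaylor (n : ℕ) (x : ℝ) : ℝ :=
  ∑ k ∈ range n, (-1) ^ k * x ^ (2 * k + 1) / (2 * k + 1)!

@[fun_prop]
theorem continuous_cosTaylor (n : ℕ) : Continuous (cosTaylor n) := by
  unfold cosTaylor; fun_prop

@[fun_prop]
theorem continuous_sinTaylor (n : ℕ) : Continuous (sinTaylor n) := by
  unfold sinTaylor; fun_prop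

theorem hasDerivAt_sinTaylor (n : ℕ) (x : ℝ) : HasDerivAt (sinTaylor n) (cosTaylor n x) x := by
  refine (HasDerivAt.fun_sum fun k _ =>
    ((hasDerivAt_pow (2 * k + 1) x).const_mul ((-1 : ℝ) ^ k)).div_const
      ((2 * k + 1)! : ℝ)).congr_deriv (sum_congr rfl fun k _ => ?_)
  rw [factorial_succ]
  push_cast
  field_simp

theorem hasDerivAt_cosTaylor_succ (n : ℕ) (x : ℝ) :
    HasDerivAt (cosTaylor (n + 1)) (-sinTaylor n x) x := by
  have h : cosTaylor (n + 1) =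
      fun y => ∑ k ∈ range n, (-1 : ℝ) ^ (k + 1) * y ^ (2 * k + 2) / (2 * k + 2)! + 1 := by
    ext y; simp [cosTaylor, sum_range_succ', mul_add]
  rw [h]
  refine ((HasDerivAt.fun_sum fun k _ =>
    ((hasDerivAt_pow (2 * k + 2) x).const_mul ((-1 : ℝ) ^ (k + 1))).div_const
      ((2 * k + 2)! : ℝ)).add_const _).congr_deriv ?_
  rw [sinTaylor, ← sum_neg_distrib]
  refine sum_congr rfl fun k _ => ?_
  rw [factorial_succ (2 * k + 1)]
  push_cast
  field_simp
  ring

theorem nonneg_of_hasDerivAt_of_nonneg {f f' : ℝ → ℝ} (hf : ∀ x, HasDerivAt f (f' x) x)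
    (h0 : f 0 = 0) (hf' : ∀ x, 0 ≤ x → 0 ≤ f' x) {x : ℝ} (hx : 0 ≤ x) : 0 ≤ f x := by
  have hmono : MonotoneOn f (Set.Ici 0) :=
    monotoneOn_of_hasDerivWithinAt_nonneg (convex_Ici 0)
      (fun y _ => (hf y).continuousAt.continuousWithinAt)
      (fun y _ => (hf y).hasDerivWithinAt)
      (fun y hy => hf' y (le_of_lt (by simpa using hy)))
  simpa [h0] using hmono Set.self_mem_Ici hx hx

theorem sinTaylor_alternating_of_cosTaylor {n : ℕ}
    (hcos : ∀ y, 0 ≤ y → 0 ≤ (-1) ^ n * (cosTaylor (n + 1) y - cos y)) {x : ℝ} (hx : 0 ≤ x) :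
    0 ≤ (-1) ^ n * (sinTaylor (n + 1) x - sin x) :=
  nonneg_of_hasDerivAt_of_nonneg
    (fun y => ((hasDerivAt_sinTaylor _ y).sub (hasDerivAt_sin y)).const_mul _)
    (by simp [sinTaylor]) hcos hx

theorem neg_one_pow_mul_cosTaylor_sub_cos_nonneg (n : ℕ) {x : ℝ} (hx : 0 ≤ x) :
    0 ≤ (-1) ^ n * (cosTaylor (n + 1) x - cos x) := by
  induction n generalizing x with
  | zero => simpa [cosTaylor] using cos_le_one x
  | succ n ih =>
    refine nonneg_of_hasDerivAt_of_nonneg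
      (fun y => ((hasDerivAt_cosTaylor_succ _ y).sub (hasDerivAt_cos y)).const_mul _)
      (by simp [cosTaylor, sum_range_succ']) (fun y hy => ?_) hx
    have := sinTaylor_alternating_of_cosTaylor (fun _ hz => ih hz) hy
    linear_combination this

theorem neg_one_pow_mul_sinTaylor_sub_sin_nonneg (n : ℕ) {x : ℝ} (hx : 0 ≤ x) :
    0 ≤ (-1) ^ n * (sinTaylor (n + 1) x - sin x) :=
  sinTaylor_alternating_of_cosTaylor (fun _ hy => neg_one_pow_mul_cosTaylor_sub_cos_nonneg n hy) hx

theorem prod_range_odd_div_even (k : ℕ) :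
    ∏ i ∈ range k, (2 * (i : ℝ) + 1) / (2 * i + 2) = (2 * k)! / (4 ^ k * (k ! : ℝ) ^ 2) := by
  induction k with
  | zero => simp
  | succ k ih =>
    rw [prod_range_succ, ih, show 2 * (k + 1) = 2 * k + 1 + 1 by ring, factorial_succ,
      factorial_succ, factorial_succ]
    push_cast
    field_simp
    ring

theorem integral_sin_pow_even_eq_factorial_div (k : ℕ) :
    ∫ u in (0:ℝ)..π, sin u ^ (2 * k) = π * (2 * k)! / (4 ^ k * (k ! : ℝ) ^ 2) := by
  rw [integral_sin_pow_even, prod_range_odd_div_even, mul_div_assoc]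

noncomputable def besselJ0Partial (n : ℕ) (t : ℝ) : ℝ :=
  ∑ k ∈ range n, (-1) ^ k * (t / 2) ^ (2 * k) / (k ! : ℝ) ^ 2

noncomputable def besselJ1Partial (n : ℕ) (t : ℝ) : ℝ :=
  ∑ k ∈ range n, (-1) ^ k * (t / 2) ^ (2 * k + 1) / (k ! * (k + 1)! : ℝ)

theorem integral_cosTaylor_mul_sin (n : ℕ) (t : ℝ) :
    ∫ u in (0:ℝ)..π, cosTaylor n (t * sin u) = π * besselJ0Partial n t := by
  simp only [cosTaylor, besselJ0Partial, mul_sum]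
  rw [integral_finsetSum fun k _ => (by fun_prop : Continuous _).intervalIntegrable _ _]
  refine sum_congr rfl fun k _ => ?_
  have h : ∀ u, (-1) ^ k * (t * sin u) ^ (2 * k) / ((2 * k)! : ℝ)
      = (-1) ^ k * t ^ (2 * k) / (2 * k)! * sin u ^ (2 * k) := fun u => by ring
  simp_rw [h, integral_const_mul, integral_sin_pow_even_eq_factorial_div, div_pow, pow_mul]
  field_simp
  norm_num

theorem integral_sin_mul_sinTaylor_mul_sin (n : ℕ) (t : ℝ) :
    ∫ u in (0:ℝ)..π, sin u * sinTaylor n (t * sin u) = π * besselJ1Partial n t := by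
  simp only [sinTaylor, besselJ1Partial, mul_sum]
  rw [integral_finsetSum fun k _ => (by fun_prop : Continuous _).intervalIntegrable _ _]
  refine sum_congr rfl fun k _ => ?_
  have h : ∀ u, sin u * ((-1) ^ k * (t * sin u) ^ (2 * k + 1) / ((2 * k + 1)! : ℝ))
      = (-1) ^ k * t ^ (2 * k + 1) / (2 * k + 1)! * sin u ^ (2 * (k + 1)) := fun u => by ring
  simp_rw [h, integral_const_mul, integral_sin_pow_even_eq_factorial_div]
  rw [show 2 * (k + 1) = 2 * k + 1 + 1 by ring, factorial_succ (2 * k + 1), factorial_succ k]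
  push_cast
  have h2 : (2 : ℝ) ^ (2 * k + 1) = 2 * 4 ^ k := by rw [pow_succ, pow_mul]; norm_num; ring
  rw [div_pow, h2]
  field_simp
  ring

theorem besselJ1_eq_integral_sin_mul_sin (t : ℝ) :
    besselJ1 t = 1 / π * ∫ u in (0:ℝ)..π, sin u * sin (t * sin u) := by
  have hodd : ∫ u in (0:ℝ)..π, cos u * cos (t * sin u) = 0 := by
    have h := integral_comp_sub_left (fun u => cos u * cos (t * sin u)) (a := 0) (b := π) π
    simp only [cos_pi_sub, sin_pi_sub, sub_self, sub_zero, neg_mul, integral_neg] at h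
    linarith
  simp_rw [besselJ1, cos_sub]
  rw [integral_add (by apply Continuous.intervalIntegrable; fun_prop)
    (by apply Continuous.intervalIntegrable; fun_prop), hodd, zero_add]

theorem neg_one_pow_mul_besselJ0Partial_sub_nonneg (n : ℕ) {t : ℝ} (ht : 0 ≤ t) :
    0 ≤ (-1) ^ n * (besselJ0Partial (n + 1) t - besselJ0 t) := by
  have key : π * ((-1) ^ n * (besselJ0Partial (n + 1) t - besselJ0 t))
      = ∫ u in (0:ℝ)..π, (-1) ^ n * (cosTaylor (n + 1) (t * sin u) - cos (t * sin u)) := by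
    rw [integral_const_mul, integral_sub (by apply Continuous.intervalIntegrable; fun_prop)
      (by apply Continuous.intervalIntegrable; fun_prop), integral_cosTaylor_mul_sin, besselJ0]
    field_simp
  refine nonneg_of_mul_nonneg_right ?_ pi_pos
  rw [key]
  exact integral_nonneg pi_pos.le fun u hu =>
    neg_one_pow_mul_cosTaylor_sub_cos_nonneg n (mul_nonneg ht (sin_nonneg_of_mem_Icc hu))

theorem neg_one_pow_mul_besselJ1Partial_sub_nonneg (n : ℕ) {t : ℝ} (ht : 0 ≤ t) :
    0 ≤ (-1) ^ n * (besselJ1Partial (n + 1) t - besselJ1 t) := by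
  have key : π * ((-1) ^ n * (besselJ1Partial (n + 1) t - besselJ1 t))
      = ∫ u in (0:ℝ)..π,
          (-1) ^ n * (sin u * sinTaylor (n + 1) (t * sin u) - sin u * sin (t * sin u)) := by
    rw [integral_const_mul, integral_sub (by apply Continuous.intervalIntegrable; fun_prop)
      (by apply Continuous.intervalIntegrable; fun_prop), integral_sin_mul_sinTaylor_mul_sin,
      besselJ1_eq_integral_sin_mul_sin]
    generalize ∫ u in (0:ℝ)..π, sin u * sin (t * sin u) = I
    field_simp
  refine nonneg_of_mul_nonneg_right ?_ pi_pos
  rw [key]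
  refine integral_nonneg pi_pos.le fun u hu => ?_
  have hsin := sin_nonneg_of_mem_Icc hu
  have := mul_nonneg hsin (neg_one_pow_mul_sinTaylor_sub_sin_nonneg n (mul_nonneg ht hsin))
  linear_combination this

theorem besselJ0_sq_add_besselJ1_sq_three_le : besselJ0 3 ^ 2 + besselJ1 3 ^ 2 ≤ 0.184 := by
  -- `J₀ 3 ≈ -0.26005` and `J₁ 3 ≈ 0.33906`; these partial sums pin them down to within `10⁻³`.
  have h3 : (0 : ℝ) ≤ 3 := by norm_num
  have hJ0_ge := neg_one_pow_mul_besselJ0Partial_sub_nonneg 5 h3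
  have hJ0_le := neg_one_pow_mul_besselJ0Partial_sub_nonneg 6 h3
  have hJ1_le := neg_one_pow_mul_besselJ1Partial_sub_nonneg 4 h3
  have hJ1_ge := neg_one_pow_mul_besselJ1Partial_sub_nonneg 5 h3
  norm_num [besselJ0Partial, besselJ1Partial, sum_range_succ, factorial]
    at hJ0_ge hJ0_le hJ1_le hJ1_ge
  nlinarith

theorem hasDerivAt_integral_mul_comp_mul_sin {f g g' : ℝ → ℝ} (hf : Continuous f)
    (hg : ∀ y, HasDerivAt g (g' y) y) (hg' : Continuous g') {C : ℝ} (hC : ∀ y, |g' y| ≤ C)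
    (t : ℝ) :
    HasDerivAt (fun s => ∫ u in (0:ℝ)..π, f u * g (s * sin u))
      (∫ u in (0:ℝ)..π, f u * sin u * g' (t * sin u)) t := by
  have hgc : Continuous g := continuous_iff_continuousAt.2 fun y => (hg y).continuousAt
  refine (intervalIntegral.hasDerivAt_integral_of_dominated_loc_of_deriv_le
    (F := fun s u => f u * g (s * sin u)) (F' := fun s u => f u * sin u * g' (s * sin u))
    (bound := fun u => |f u| * C) Filter.univ_mem ?_ ?_ ?_ ?_ ?_ ?_).2
  · exact .of_forall fun s => (by fun_prop : Continuous _).aestronglyMeasurable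
  · exact (by fun_prop : Continuous _).intervalIntegrable _ _
  · exact (by fun_prop : Continuous _).aestronglyMeasurable
  · refine .of_forall fun u _ s _ => ?_
    rw [norm_eq_abs, abs_mul, abs_mul]
    gcongr
    · exact mul_le_of_le_one_right (abs_nonneg _) (abs_sin_le_one u)
    · exact hC _
  · exact (by fun_prop : Continuous _).intervalIntegrable _ _
  · refine .of_forall fun u _ s _ => ?_
    exact (((hg _).comp s (hasDerivAt_mul_const (sin u))).const_mul (f u)).congr_deriv (by ring)

theorem hasDerivAt_besselJ0 (t : ℝ) : HasDerivAt besselJ0 (-besselJ1 t) t := by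
  have h := (hasDerivAt_integral_mul_comp_mul_sin (f := fun _ => 1) continuous_const hasDerivAt_cos
    (by fun_prop) (fun y => by simpa using abs_sin_le_one y) t).const_mul (1 / π)
  simp only [one_mul, mul_neg] at h
  rw [besselJ1_eq_integral_sin_mul_sin, ← mul_neg, ← integral_neg]
  exact h

theorem mul_integral_cos_sq_mul_cos_mul_sin (t : ℝ) :
    t * ∫ u in (0:ℝ)..π, cos u ^ 2 * cos (t * sin u)
      = ∫ u in (0:ℝ)..π, sin u * sin (t * sin u) := by
  have h := integral_mul_deriv_eq_deriv_mul (a := 0) (b := π)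
    (fun w _ => hasDerivAt_cos w)
    (fun w _ => (hasDerivAt_sin (t * sin w)).comp w ((hasDerivAt_sin w).const_mul t))
    (by apply Continuous.intervalIntegrable; fun_prop)
    (by apply Continuous.intervalIntegrable; fun_prop)
  calc t * ∫ u in (0:ℝ)..π, cos u ^ 2 * cos (t * sin u)
      = ∫ u in (0:ℝ)..π, cos u * (cos (t * sin u) * (t * cos u)) := by
        rw [← integral_const_mul]; exact integral_congr fun u _ => by ring
    _ = ∫ u in (0:ℝ)..π, sin u * sin (t * sin u) := by simp [h]

theorem hasDerivAt_besselJ1 {t : ℝ} (ht : t ≠ 0) :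
    HasDerivAt besselJ1 (besselJ0 t - besselJ1 t / t) t := by
  have h := (hasDerivAt_integral_mul_comp_mul_sin continuous_sin hasDerivAt_sin
    (by fun_prop) abs_cos_le_one t).const_mul (1 / π)
  rw [show besselJ1 = _ from funext besselJ1_eq_integral_sin_mul_sin]
  refine h.congr_deriv ?_
  have hsplit : ∫ u in (0:ℝ)..π, sin u * sin u * cos (t * sin u)
      = (∫ u in (0:ℝ)..π, cos (t * sin u)) - ∫ u in (0:ℝ)..π, cos u ^ 2 * cos (t * sin u) := by
    rw [← integral_sub (by apply Continuous.intervalIntegrable; fun_prop)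
      (by apply Continuous.intervalIntegrable; fun_prop)]
    exact integral_congr fun u _ => by linear_combination cos (t * sin u) * sin_sq_add_cos_sq u
  beta_reduce
  rw [hsplit, besselJ0, ← mul_integral_cos_sq_mul_cos_mul_sin]
  field_simp

theorem antitoneOn_besselJ0_sq_add_besselJ1_sq :
    AntitoneOn (fun t => besselJ0 t ^ 2 + besselJ1 t ^ 2) (Set.Ioi 0) := by
  have hderiv : ∀ t ∈ Set.Ioi (0 : ℝ), HasDerivAt (fun t => besselJ0 t ^ 2 + besselJ1 t ^ 2)
      (-(2 * besselJ1 t ^ 2 / t)) t := fun t ht =>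
    (((hasDerivAt_besselJ0 t).pow 2).add ((hasDerivAt_besselJ1 (ne_of_gt ht)).pow 2)).congr_deriv
      (by field_simp; ring)
  refine antitoneOn_of_hasDerivWithinAt_nonpos (convex_Ioi 0)
    (fun t ht => (hderiv t ht).continuousAt.continuousWithinAt)
    (fun t ht => (hderiv t (by simpa using ht)).hasDerivWithinAt) fun t ht => ?_
  have ht : 0 < t := by simpa using ht
  have := sq_nonneg (besselJ1 t)
  simp only [neg_nonpos]
  positivity

theorem hasDerivAt_abs_pow_three (x : ℝ) : HasDerivAt (fun y => |y| ^ 3) (3 * |x| * x) x := by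
  convert hasDerivAt_abs_rpow x (p := 3) (by norm_num) using 1
  · ext y; norm_cast
  · norm_num

theorem three_mul_sq_mul_lt {x y : ℝ} (hy : 0 ≤ y) (h : x ^ 2 + y ^ 2 ≤ 0.184) :
    3 * x ^ 2 * y < 0.1 := by
  -- On `x² + y² = m`, `3 x² y` is maximal at `y = √(m / 3) ≈ 0.248`, with value `≈ 0.091`.
  nlinarith [mul_nonneg (sq_nonneg (y - 0.248)) hy, sq_nonneg (y - 0.248), sq_nonneg x,
    mul_nonneg (sq_nonneg x) hy]

theorem stmt19 (t : ℝ) (ht : t ∈ Set.Icc (3:ℝ) 12) :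
    |deriv (fun u : ℝ => |besselJ0 u| ^ 3) t| = 3 * besselJ0 t ^ 2 * |besselJ1 t| ∧
    3 * besselJ0 t ^ 2 * |besselJ1 t| < 0.1 := by
  have hderiv : HasDerivAt (fun u => |besselJ0 u| ^ 3)
      (3 * |besselJ0 t| * besselJ0 t * -besselJ1 t) t :=
    (hasDerivAt_abs_pow_three _).comp t (hasDerivAt_besselJ0 t)
  have hdecay : besselJ0 t ^ 2 + besselJ1 t ^ 2 ≤ besselJ0 3 ^ 2 + besselJ1 3 ^ 2 :=
    antitoneOn_besselJ0_sq_add_besselJ1_sq (by norm_num : (3 : ℝ) ∈ Set.Ioi 0)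
      (lt_of_lt_of_le (by norm_num) ht.1) ht.1
  refine ⟨?_, three_mul_sq_mul_lt (abs_nonneg _) ?_⟩
  · rw [hderiv.deriv, abs_mul, abs_mul, abs_mul, abs_neg, abs_abs, abs_of_pos three_pos]
    linear_combination 3 * |besselJ1 t| * abs_mul_abs_self (besselJ0 t)
  · rw [sq_abs]
    exact hdecay.trans besselJ0_sq_add_besselJ1_sq_three_le
end
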